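/- arXiv:2305.01577 — 3 statements merged into one kernel-verified Lean document; each statement's English description precedes it below -/
import Mathlib

section
/- For every tree T, the number of independent sets of T is strictly greater than the number of 2-dominating sets of T. -/
open SimpleGraph

/-- `D` is a `k`-dominating set of `G`: every vertex not in `D` has at least
`k` neighbors in `D`. -/
def IsKDomSet {V : Type*} (G : SimpleGraph V) (k : ℕ) (D : Finset V) : Prop :=
  ∀ v : V, v ∉ D → k ≤ {w : V | G.Adj v w ∧ w ∈ D}.ncard

/-- `I` is an independent set of `G`. -/
def IsIndepFinset {V : Type*} (G : SimpleGraph V) (I : Finset V) : Prop :=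
  ∀ u ∈ I, ∀ v ∈ I, ¬ G.Adj u v

/-- The number of `k`-dominating sets of `G`. -/
noncomputable def numKDom {V : Type*} (G : SimpleGraph V) (k : ℕ) : ℕ :=
  Nat.card {D : Finset V // IsKDomSet G k D}

/-- The number of independent sets of `G`. -/
noncomputable def numIndep {V : Type*} (G : SimpleGraph V) : ℕ :=
  Nat.card {I : Finset V // IsIndepFinset G I}

/-- A graph is outerplanar iff its vertices can be placed (injectively) on a line
(thought of as positions on a circle) so that edges, drawn as chords, do not cross:
no two edges `ab`, `cd` interleave as `a < c < b < d`. -/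
def IsOuterplanar {V : Type*} (G : SimpleGraph V) : Prop :=
  ∃ f : V → ℕ, Function.Injective f ∧
    ∀ a b c d : V, G.Adj a b → G.Adj c d →
      ¬ (f a < f c ∧ f c < f b ∧ f b < f d)

/-- A graph is maximal outerplanar if it is outerplanar and adding any edge
between distinct non-adjacent vertices destroys outerplanarity. -/
def IsMaxOuterplanar {V : Type*} (G : SimpleGraph V) : Prop :=
  IsOuterplanar G ∧ ∀ u v : V, u ≠ v → ¬ G.Adj u v →
    ¬ IsOuterplanar (G ⊔ SimpleGraph.fromEdgeSet {s(u, v)})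

open Finset

namespace TreeCount
set_option linter.unusedSectionVars false

variable {V : Type*} [Fintype V] [DecidableEq V] (G : SimpleGraph V) [DecidableRel G.Adj]

/-- number of neighbors of `w` inside `D` -/
def nb (w : V) (D : Finset V) : ℕ :=
  (D.filter (fun z => G.Adj w z)).card

/-- number of subsets of `s` satisfying `P` -/
def cnt (s : Finset V) (P : Finset V → Prop) [DecidablePred P] : ℕ :=
  (s.powerset.filter P).card

def Ind (I : Finset V) : Prop := ∀ a ∈ I, ∀ b ∈ I, ¬ G.Adj a b

instance (I : Finset V) : Decidable (Ind G I) := by unfold Ind; infer_instance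

/-- all vertices of `s` outside `D` other than `u` have ≥ 2 neighbors in `D` -/
def Sat (s : Finset V) (u : V) (D : Finset V) : Prop :=
  ∀ w ∈ s, w ∉ D → w ≠ u → 2 ≤ nb G w D

instance (s : Finset V) (u : V) (D : Finset V) : Decidable (Sat G s u D) := by
  unfold Sat; infer_instance

def qA (s : Finset V) (u : V) : ℕ :=
  cnt s (fun D => u ∈ D ∧ Sat G s u D)
def qB0 (s : Finset V) (u : V) : ℕ :=
  cnt s (fun D => u ∉ D ∧ Sat G s u D ∧ nb G u D = 0)
def qB1 (s : Finset V) (u : V) : ℕ :=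
  cnt s (fun D => u ∉ D ∧ Sat G s u D ∧ nb G u D = 1)
def qB2 (s : Finset V) (u : V) : ℕ :=
  cnt s (fun D => u ∉ D ∧ Sat G s u D ∧ 2 ≤ nb G u D)
def qP (s : Finset V) (u : V) : ℕ :=
  cnt s (fun I => Ind G I ∧ u ∈ I)
def qQ (s : Finset V) (u : V) : ℕ :=
  cnt s (fun I => Ind G I ∧ u ∉ I)

lemma cnt_congr {s : Finset V} {P P' : Finset V → Prop} [DecidablePred P] [DecidablePred P']
    (h : ∀ D ⊆ s, (P D ↔ P' D)) : cnt s P = cnt s P' := by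
  unfold cnt
  congr 1
  apply Finset.filter_congr
  intro D hD
  simpa using h D (Finset.mem_powerset.1 hD)

lemma cnt_mono {s : Finset V} {P P' : Finset V → Prop} [DecidablePred P] [DecidablePred P']
    (h : ∀ D ⊆ s, P D → P' D) : cnt s P ≤ cnt s P' := by
  unfold cnt
  apply Finset.card_le_card
  intro D hD
  simp only [Finset.mem_filter, Finset.mem_powerset] at hD ⊢
  exact ⟨hD.1, h D hD.1 hD.2⟩

lemma cnt_add {s : Finset V} {P Q : Finset V → Prop} [DecidablePred P] [DecidablePred Q]
    (h : ∀ D ⊆ s, ¬ (P D ∧ Q D)) :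
    cnt s (fun D => P D ∨ Q D) = cnt s P + cnt s Q := by
  unfold cnt
  have he : (s.powerset.filter (fun D => P D ∨ Q D))
      = s.powerset.filter P ∪ s.powerset.filter Q := by
    ext D
    simp only [Finset.mem_filter, Finset.mem_union]
    tauto
  rw [he, Finset.card_union_of_disjoint]
  rw [Finset.disjoint_left]
  intro D h1 h2
  simp only [Finset.mem_filter, Finset.mem_powerset] at h1 h2
  exact h D h1.1 ⟨h1.2, h2.2⟩

lemma inter_union_left {s₁ s₂ D₁ D₂ : Finset V} (h1 : D₁ ⊆ s₁) (h2 : D₂ ⊆ s₂)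
    (hdis : Disjoint s₁ s₂) : (D₁ ∪ D₂) ∩ s₁ = D₁ := by
  ext z
  simp only [Finset.mem_inter, Finset.mem_union]
  constructor
  · rintro ⟨hz | hz, hzs⟩
    · exact hz
    · exact absurd hzs (Finset.disjoint_right.1 hdis (h2 hz))
  · intro hz; exact ⟨Or.inl hz, h1 hz⟩

lemma inter_union_right {s₁ s₂ D₁ D₂ : Finset V} (h1 : D₁ ⊆ s₁) (h2 : D₂ ⊆ s₂)
    (hdis : Disjoint s₁ s₂) : (D₁ ∪ D₂) ∩ s₂ = D₂ := by
  ext z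
  simp only [Finset.mem_inter, Finset.mem_union]
  constructor
  · rintro ⟨hz | hz, hzs⟩
    · exact absurd hzs (Finset.disjoint_left.1 hdis (h1 hz))
    · exact hz
  · intro hz; exact ⟨Or.inr hz, h2 hz⟩

lemma cnt_mul {s₁ s₂ : Finset V} (hdis : Disjoint s₁ s₂)
    {P P₁ P₂ : Finset V → Prop} [DecidablePred P] [DecidablePred P₁] [DecidablePred P₂]
    (h : ∀ D ⊆ s₁ ∪ s₂, (P D ↔ P₁ (D ∩ s₁) ∧ P₂ (D ∩ s₂))) :
    cnt (s₁ ∪ s₂) P = cnt s₁ P₁ * cnt s₂ P₂ := by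
  unfold cnt
  rw [← Finset.card_product]
  apply Finset.card_bij' (i := fun D _ => (D ∩ s₁, D ∩ s₂))
    (j := fun p _ => p.1 ∪ p.2)
  · intro D hD
    simp only [Finset.mem_filter, Finset.mem_powerset] at hD
    simp only [Finset.mem_product, Finset.mem_filter, Finset.mem_powerset]
    exact ⟨⟨Finset.inter_subset_right, ((h D hD.1).1 hD.2).1⟩,
      Finset.inter_subset_right, ((h D hD.1).1 hD.2).2⟩
  · intro p hp
    simp only [Finset.mem_product, Finset.mem_filter, Finset.mem_powerset] at hp
    simp only [Finset.mem_filter, Finset.mem_powerset]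
    have hsub : p.1 ∪ p.2 ⊆ s₁ ∪ s₂ := Finset.union_subset_union hp.1.1 hp.2.1
    refine ⟨hsub, ?_⟩
    rw [h _ hsub, inter_union_left hp.1.1 hp.2.1 hdis,
      inter_union_right hp.1.1 hp.2.1 hdis]
    exact ⟨hp.1.2, hp.2.2⟩
  · intro D hD
    simp only [Finset.mem_filter, Finset.mem_powerset] at hD
    have : D ⊆ s₁ ∪ s₂ := hD.1
    rw [← Finset.inter_union_distrib_left]
    exact (Finset.inter_eq_left.2 this)
  · intro p hp
    simp only [Finset.mem_product, Finset.mem_filter, Finset.mem_powerset] at hp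
    ext1
    · exact inter_union_left hp.1.1 hp.2.1 hdis
    · exact inter_union_right hp.1.1 hp.2.1 hdis



/-- `s` is connected in `G` via walks staying inside `s`. -/
def Conn (s : Finset V) : Prop :=
  ∀ x ∈ s, ∀ y ∈ s, ∃ w : G.Walk x y, ∀ z ∈ w.support, z ∈ s

omit [Fintype V] [DecidableRel G.Adj] in
lemma not_end_mem_takeUntil {v u r : V} {p : G.Walk v u} (hp : p.IsPath)
    (h : r ∈ p.support) (hru : r ≠ u) : u ∉ (p.takeUntil r h).support := by
  intro hu
  have hspec := p.take_spec h
  have hnodup : p.support.Nodup := hp.support_nodup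
  rw [← hspec, Walk.support_append] at hnodup
  have hdrop : u ∈ (p.dropUntil r h).support.tail := by
    have hend : u ∈ (p.dropUntil r h).support := Walk.end_mem_support _
    rw [Walk.support_eq_cons] at hend
    rcases List.mem_cons.1 hend with h1 | h1
    · exact absurd h1.symm hru
    · exact h1
  exact (List.disjoint_of_nodup_append hnodup) hu hdrop

omit [Fintype V] [DecidableRel G.Adj] in
lemma exists_nbr {s : Finset V} (hs : Conn G s) {u : V} (hu : u ∈ s)
    (hcard : 1 < s.card) : ∃ r ∈ s, G.Adj u r := by
  obtain ⟨y, hy, hyu⟩ := Finset.exists_mem_ne hcard u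
  obtain ⟨w, hw⟩ := hs u hu y hy
  cases w with
  | nil => exact absurd rfl hyu
  | @cons _ b _ h p =>
      exact ⟨b, hw b (by simp [Walk.support_cons, p.start_mem_support]), h⟩

omit [Fintype V] [DecidableRel G.Adj] in
lemma split_exists (hG : G.IsAcyclic) {s : Finset V} (hs : Conn G s) {u r : V}
    (hu : u ∈ s) (hr : r ∈ s) (hadj : G.Adj u r) :
    ∃ s₁ s₂ : Finset V, Disjoint s₁ s₂ ∧ s₁ ∪ s₂ = s ∧ u ∈ s₁ ∧ r ∈ s₂ ∧
      Conn G s₁ ∧ Conn G s₂ ∧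
      (∀ a ∈ s₁, ∀ b ∈ s₂, G.Adj a b → a = u ∧ b = r) := by
  classical
  have hur : u ≠ r := hadj.ne
  set s₁ := s.filter
    (fun w => ∃ p : G.Walk w u, (∀ z ∈ p.support, z ∈ s) ∧ r ∉ p.support) with hs₁def
  set s₂ := s.filter
    (fun w => ∃ p : G.Walk w r, (∀ z ∈ p.support, z ∈ s) ∧ u ∉ p.support) with hs₂def
  have hmem₁ : u ∈ s₁ := by
    refine Finset.mem_filter.2 ⟨hu, ⟨Walk.nil, ?_, ?_⟩⟩
    · intro z hz; rw [Walk.support_nil, List.mem_singleton] at hz; exact hz ▸ hu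
    · rw [Walk.support_nil, List.mem_singleton]; exact hur.symm
  have hmem₂ : r ∈ s₂ := by
    refine Finset.mem_filter.2 ⟨hr, ⟨Walk.nil, ?_, ?_⟩⟩
    · intro z hz; rw [Walk.support_nil, List.mem_singleton] at hz; exact hz ▸ hr
    · rw [Walk.support_nil, List.mem_singleton]; exact hur
  have hdisj : Disjoint s₁ s₂ := by
    rw [Finset.disjoint_left]
    intro w h1 h2
    obtain ⟨p, hpS, hpr⟩ := (Finset.mem_filter.1 h1).2
    obtain ⟨q, hqS, hqu⟩ := (Finset.mem_filter.1 h2).2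
    have hp' : p.bypass.IsPath := Walk.bypass_isPath p
    have hq' : q.bypass.IsPath := Walk.bypass_isPath q
    have hpr' : r ∉ p.bypass.support := fun hc => hpr (p.support_bypass_subset hc)
    have hqu' : u ∉ q.bypass.support := fun hc => hqu (q.support_bypass_subset hc)
    have hB : (Walk.cons hadj q.bypass.reverse).IsPath := by
      rw [Walk.cons_isPath_iff]
      refine ⟨hq'.reverse, ?_⟩
      rw [Walk.support_reverse, List.mem_reverse]
      exact hqu'
    have := hG.path_unique ⟨p.bypass.reverse, hp'.reverse⟩
      ⟨Walk.cons hadj q.bypass.reverse, hB⟩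
    have hval : p.bypass.reverse = Walk.cons hadj q.bypass.reverse :=
      congrArg Subtype.val this
    have hrB : r ∈ (Walk.cons hadj q.bypass.reverse).support := by
      rw [Walk.support_cons]
      exact List.mem_cons_of_mem _ (by
        rw [Walk.support_reverse, List.mem_reverse]
        exact q.bypass.end_mem_support)
    rw [← hval, Walk.support_reverse, List.mem_reverse] at hrB
    exact hpr' hrB
  have hcover : s₁ ∪ s₂ = s := by
    apply Finset.Subset.antisymm
    · exact Finset.union_subset (Finset.filter_subset _ _) (Finset.filter_subset _ _)
    · intro w hw
      obtain ⟨w0, hw0S⟩ := hs w hw u hu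
      have hp : w0.bypass.IsPath := Walk.bypass_isPath w0
      have hpS : ∀ z ∈ w0.bypass.support, z ∈ s :=
        fun z hz => hw0S z (w0.support_bypass_subset hz)
      by_cases hrmem : r ∈ w0.bypass.support
      · refine Finset.mem_union.2 (Or.inr (Finset.mem_filter.2 ⟨hw,
          ⟨w0.bypass.takeUntil r hrmem, ?_, ?_⟩⟩))
        · exact fun z hz => hpS z (w0.bypass.support_takeUntil_subset hrmem hz)
        · exact not_end_mem_takeUntil G hp hrmem hadj.ne'
      · exact Finset.mem_union.2 (Or.inl (Finset.mem_filter.2 ⟨hw,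
          ⟨w0.bypass, hpS, hrmem⟩⟩))
  have hcross : ∀ a ∈ s₁, ∀ b ∈ s₂, G.Adj a b → a = u ∧ b = r := by
    intro a ha b hb hab
    obtain ⟨p, hpS, hpr⟩ := (Finset.mem_filter.1 ha).2
    have hbr : b = r := by
      by_contra hbr
      have hb1 : b ∈ s₁ := by
        refine Finset.mem_filter.2 ⟨(Finset.mem_filter.1 hb).1,
          ⟨Walk.cons hab.symm p, ?_, ?_⟩⟩
        · intro z hz
          rw [Walk.support_cons, List.mem_cons] at hz
          rcases hz with h1 | h1
          · exact h1 ▸ (Finset.mem_filter.1 hb).1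
          · exact hpS z h1
        · rw [Walk.support_cons, List.mem_cons]
          rintro (h1 | h1)
          · exact hbr h1.symm
          · exact hpr h1
      exact (Finset.disjoint_left.1 hdisj hb1) hb
    subst hbr
    have hau : a = u := by
      by_contra hau
      have ha2 : a ∈ s₂ := by
        refine Finset.mem_filter.2 ⟨(Finset.mem_filter.1 ha).1,
          ⟨Walk.cons hab Walk.nil, ?_, ?_⟩⟩
        · intro z hz
          rw [Walk.support_cons, Walk.support_nil] at hz
          rcases List.mem_cons.1 hz with h1 | h1
          · exact h1 ▸ (Finset.mem_filter.1 ha).1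
          · rw [List.mem_singleton] at h1; exact h1 ▸ hr
        · rw [Walk.support_cons, Walk.support_nil]
          intro hc
          rcases List.mem_cons.1 hc with h1 | h1
          · exact hau h1.symm
          · rw [List.mem_singleton] at h1; exact hur h1
      exact (Finset.disjoint_left.1 hdisj ha) ha2
    exact ⟨hau, rfl⟩
  have hconn₁ : Conn G s₁ := by
    intro x hx y hy
    obtain ⟨px, hpxS, hpxr⟩ := (Finset.mem_filter.1 hx).2
    obtain ⟨py, hpyS, hpyr⟩ := (Finset.mem_filter.1 hy).2
    refine ⟨px.append py.reverse, ?_⟩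
    intro z hz
    rw [Walk.mem_support_append_iff] at hz
    rcases hz with hz | hz
    · refine Finset.mem_filter.2 ⟨hpxS z hz, ⟨px.dropUntil z hz, ?_, ?_⟩⟩
      · exact fun t ht => hpxS t (px.support_dropUntil_subset hz ht)
      · exact fun hc => hpxr (px.support_dropUntil_subset hz hc)
    · rw [Walk.support_reverse, List.mem_reverse] at hz
      refine Finset.mem_filter.2 ⟨hpyS z hz, ⟨py.dropUntil z hz, ?_, ?_⟩⟩
      · exact fun t ht => hpyS t (py.support_dropUntil_subset hz ht)
      · exact fun hc => hpyr (py.support_dropUntil_subset hz hc)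
  have hconn₂ : Conn G s₂ := by
    intro x hx y hy
    obtain ⟨px, hpxS, hpxr⟩ := (Finset.mem_filter.1 hx).2
    obtain ⟨py, hpyS, hpyr⟩ := (Finset.mem_filter.1 hy).2
    refine ⟨px.append py.reverse, ?_⟩
    intro z hz
    rw [Walk.mem_support_append_iff] at hz
    rcases hz with hz | hz
    · refine Finset.mem_filter.2 ⟨hpxS z hz, ⟨px.dropUntil z hz, ?_, ?_⟩⟩
      · exact fun t ht => hpxS t (px.support_dropUntil_subset hz ht)
      · exact fun hc => hpxr (px.support_dropUntil_subset hz hc)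
    · rw [Walk.support_reverse, List.mem_reverse] at hz
      refine Finset.mem_filter.2 ⟨hpyS z hz, ⟨py.dropUntil z hz, ?_, ?_⟩⟩
      · exact fun t ht => hpyS t (py.support_dropUntil_subset hz ht)
      · exact fun hc => hpyr (py.support_dropUntil_subset hz hc)
  exact ⟨s₁, s₂, hdisj, hcover, hmem₁, hmem₂, hconn₁, hconn₂, hcross⟩



section Split

variable {s₁ s₂ : Finset V} {u r : V}

omit [Fintype V] in
lemma nb_union {A B : Finset V} (hAB : Disjoint A B) (w : V) :
    nb G w (A ∪ B) = nb G w A + nb G w B := by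
  unfold nb
  rw [Finset.filter_union, Finset.card_union_of_disjoint
    (Finset.disjoint_filter_filter hAB)]

omit [Fintype V] [DecidableRel G.Adj] in
lemma D_split {D : Finset V} (hD : D ⊆ s₁ ∪ s₂) : D = (D ∩ s₁) ∪ (D ∩ s₂) := by
  rw [← Finset.inter_union_distrib_left]
  exact (Finset.inter_eq_left.2 hD).symm

variable (hdis : Disjoint s₁ s₂) (hu1 : u ∈ s₁) (hr2 : r ∈ s₂) (hadj : G.Adj u r)
  (hcross : ∀ a ∈ s₁, ∀ b ∈ s₂, G.Adj a b → a = u ∧ b = r)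

omit [Fintype V] in
include hdis hcross in
lemma nb_in₁ {D : Finset V} (hD : D ⊆ s₁ ∪ s₂) {w : V} (hw : w ∈ s₁) (hwu : w ≠ u) :
    nb G w D = nb G w (D ∩ s₁) := by
  have h0 : nb G w (D ∩ s₂) = 0 := by
    unfold nb
    rw [Finset.card_eq_zero, Finset.filter_eq_empty_iff]
    intro z hz hadjz
    exact hwu (hcross w hw z (Finset.mem_inter.1 hz).2 hadjz).1
  conv_lhs => rw [D_split hD]
  rw [nb_union G (hdis.mono Finset.inter_subset_right Finset.inter_subset_right), h0]
  omega

omit [Fintype V] in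
include hdis hu1 hr2 hadj hcross in
lemma nb_u_eq {D : Finset V} (hD : D ⊆ s₁ ∪ s₂) :
    nb G u D = nb G u (D ∩ s₁) + (if r ∈ D then 1 else 0) := by
  have h0 : nb G u (D ∩ s₂) = (if r ∈ D then 1 else 0) := by
    unfold nb
    have he : (D ∩ s₂).filter (fun z => G.Adj u z)
        = if r ∈ D then {r} else ∅ := by
      ext z
      rw [Finset.mem_filter]
      split_ifs with hrD
      · rw [Finset.mem_singleton]
        constructor
        · rintro ⟨hz, hadjz⟩
          exact (hcross u hu1 z (Finset.mem_inter.1 hz).2 hadjz).2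
        · rintro rfl
          exact ⟨Finset.mem_inter.2 ⟨hrD, hr2⟩, hadj⟩
      · simp only [Finset.notMem_empty, iff_false]
        rintro ⟨hz, hadjz⟩
        exact hrD (((hcross u hu1 z (Finset.mem_inter.1 hz).2 hadjz).2) ▸
          (Finset.mem_inter.1 hz).1)
    rw [he]
    split_ifs <;> simp
  conv_lhs => rw [D_split hD]
  rw [nb_union G (hdis.mono Finset.inter_subset_right Finset.inter_subset_right), h0]

omit [Fintype V] in
include hdis hcross in
lemma nb_in₂ {D : Finset V} (hD : D ⊆ s₁ ∪ s₂) {w : V} (hw : w ∈ s₂) (hwr : w ≠ r) :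
    nb G w D = nb G w (D ∩ s₂) := by
  have h0 : nb G w (D ∩ s₁) = 0 := by
    unfold nb
    rw [Finset.card_eq_zero, Finset.filter_eq_empty_iff]
    intro z hz hadjz
    exact hwr (hcross z (Finset.mem_inter.1 hz).2 w hw hadjz.symm).2
  conv_lhs => rw [D_split hD]
  rw [nb_union G (hdis.mono Finset.inter_subset_right Finset.inter_subset_right), h0]
  omega

omit [Fintype V] in
include hdis hu1 hr2 hadj hcross in
lemma nb_r_eq {D : Finset V} (hD : D ⊆ s₁ ∪ s₂) :
    nb G r D = nb G r (D ∩ s₂) + (if u ∈ D then 1 else 0) := by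
  have h0 : nb G r (D ∩ s₁) = (if u ∈ D then 1 else 0) := by
    unfold nb
    have he : (D ∩ s₁).filter (fun z => G.Adj r z)
        = if u ∈ D then {u} else ∅ := by
      ext z
      rw [Finset.mem_filter]
      split_ifs with huD
      · rw [Finset.mem_singleton]
        constructor
        · rintro ⟨hz, hadjz⟩
          exact (hcross z (Finset.mem_inter.1 hz).2 r hr2 hadjz.symm).1
        · rintro rfl
          exact ⟨Finset.mem_inter.2 ⟨huD, hu1⟩, hadj.symm⟩
      · simp only [Finset.notMem_empty, iff_false]
        rintro ⟨hz, hadjz⟩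
        exact huD (((hcross z (Finset.mem_inter.1 hz).2 r hr2 hadjz.symm).1) ▸
          (Finset.mem_inter.1 hz).1)
    rw [he]
    split_ifs <;> simp
  conv_lhs => rw [D_split hD]
  rw [nb_union G (hdis.mono Finset.inter_subset_right Finset.inter_subset_right), h0]
  omega

omit [Fintype V] in
include hdis hu1 hr2 hadj hcross in
lemma sat_split {D : Finset V} (hD : D ⊆ s₁ ∪ s₂) :
    Sat G (s₁ ∪ s₂) u D ↔
      Sat G s₁ u (D ∩ s₁) ∧ Sat G s₂ r (D ∩ s₂) ∧
      (r ∉ D → 2 ≤ nb G r (D ∩ s₂) + (if u ∈ D then 1 else 0)) := by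
  constructor
  · intro hsat
    refine ⟨?_, ?_, ?_⟩
    · intro w hw hwD hwu
      have hwD' : w ∉ D := fun hc => hwD (Finset.mem_inter.2 ⟨hc, hw⟩)
      have := hsat w (Finset.mem_union.2 (Or.inl hw)) hwD' hwu
      rwa [nb_in₁ G hdis hcross hD hw hwu] at this
    · intro w hw hwD hwr
      have hwu : w ≠ u := fun hc => (Finset.disjoint_left.1 hdis hu1) (hc ▸ hw)
      have hwD' : w ∉ D := fun hc => hwD (Finset.mem_inter.2 ⟨hc, hw⟩)
      have := hsat w (Finset.mem_union.2 (Or.inr hw)) hwD' hwu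
      rwa [nb_in₂ G hdis hcross hD hw hwr] at this
    · intro hrD
      have hru : r ≠ u := hadj.ne'
      have := hsat r (Finset.mem_union.2 (Or.inr hr2)) hrD hru
      rwa [nb_r_eq G hdis hu1 hr2 hadj hcross hD] at this
  · rintro ⟨h1, h2, h3⟩ w hw hwD hwu
    rcases Finset.mem_union.1 hw with hw1 | hw2
    · rw [nb_in₁ G hdis hcross hD hw1 hwu]
      exact h1 w hw1 (fun hc => hwD (Finset.mem_inter.1 hc).1) hwu
    · by_cases hwr : w = r
      · subst hwr
        rw [nb_r_eq G hdis hu1 hr2 hadj hcross hD]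
        exact h3 hwD
      · rw [nb_in₂ G hdis hcross hD hw2 hwr]
        exact h2 w hw2 (fun hc => hwD (Finset.mem_inter.1 hc).1) hwr

omit [Fintype V] in
include hdis hu1 hr2 hadj hcross in
lemma ind_split {I : Finset V} (hI : I ⊆ s₁ ∪ s₂) :
    Ind G I ↔ Ind G (I ∩ s₁) ∧ Ind G (I ∩ s₂) ∧ ¬ (u ∈ I ∧ r ∈ I) := by
  constructor
  · intro hind
    refine ⟨?_, ?_, ?_⟩
    · intro a ha b hb
      exact hind a (Finset.mem_inter.1 ha).1 b (Finset.mem_inter.1 hb).1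
    · intro a ha b hb
      exact hind a (Finset.mem_inter.1 ha).1 b (Finset.mem_inter.1 hb).1
    · rintro ⟨hui, hri⟩
      exact hind u hui r hri hadj
  · rintro ⟨h1, h2, h3⟩ a ha b hb hab
    rcases Finset.mem_union.1 (hI ha) with ha' | ha' <;>
      rcases Finset.mem_union.1 (hI hb) with hb' | hb'
    · exact h1 a (Finset.mem_inter.2 ⟨ha, ha'⟩) b (Finset.mem_inter.2 ⟨hb, hb'⟩) hab
    · obtain ⟨rfl, rfl⟩ := hcross a ha' b hb' hab
      exact h3 ⟨ha, hb⟩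
    · obtain ⟨rfl, rfl⟩ := hcross b hb' a ha' hab.symm
      exact h3 ⟨hb, ha⟩
    · exact h2 a (Finset.mem_inter.2 ⟨ha, ha'⟩) b (Finset.mem_inter.2 ⟨hb, hb'⟩) hab

include hdis hu1 hr2 hadj hcross in
lemma qA_split :
    qA G (s₁ ∪ s₂) u = qA G s₁ u * (qA G s₂ r + (qB1 G s₂ r + qB2 G s₂ r)) := by
  have key : cnt (s₁ ∪ s₂) (fun D => u ∈ D ∧ Sat G (s₁ ∪ s₂) u D)
      = cnt s₁ (fun D => u ∈ D ∧ Sat G s₁ u D)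
        * cnt s₂ (fun D => Sat G s₂ r D ∧ (r ∈ D ∨ 1 ≤ nb G r D)) := by
    apply cnt_mul hdis
    intro D hD
    have hsat := sat_split G hdis hu1 hr2 hadj hcross hD
    constructor
    · rintro ⟨huD, hS⟩
      obtain ⟨h1, h2, h3⟩ := hsat.1 hS
      refine ⟨⟨Finset.mem_inter.2 ⟨huD, hu1⟩, h1⟩, h2, ?_⟩
      by_cases hrD : r ∈ D
      · exact Or.inl (Finset.mem_inter.2 ⟨hrD, hr2⟩)
      · have := h3 hrD; rw [if_pos huD] at this; right; omega
    · rintro ⟨⟨huD, h1⟩, h2, h3⟩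
      have huD' := (Finset.mem_inter.1 huD).1
      refine ⟨huD', hsat.2 ⟨h1, h2, fun hrD => ?_⟩⟩
      rw [if_pos huD']
      rcases h3 with h | h
      · exact absurd (Finset.mem_inter.1 h).1 hrD
      · omega
  have e1 : cnt s₂ (fun D => Sat G s₂ r D ∧ (r ∈ D ∨ 1 ≤ nb G r D))
      = cnt s₂ (fun D => (r ∈ D ∧ Sat G s₂ r D) ∨
          (r ∉ D ∧ Sat G s₂ r D ∧ 1 ≤ nb G r D)) := by
    apply cnt_congr; intro D hD; tauto
  have e2 : cnt s₂ (fun D => (r ∈ D ∧ Sat G s₂ r D) ∨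
        (r ∉ D ∧ Sat G s₂ r D ∧ 1 ≤ nb G r D))
      = qA G s₂ r + cnt s₂ (fun D => r ∉ D ∧ Sat G s₂ r D ∧ 1 ≤ nb G r D) := by
    apply cnt_add; rintro D hD ⟨⟨h1, _⟩, ⟨h2, _⟩⟩; exact h2 h1
  have e3 : cnt s₂ (fun D => r ∉ D ∧ Sat G s₂ r D ∧ 1 ≤ nb G r D)
      = cnt s₂ (fun D => (r ∉ D ∧ Sat G s₂ r D ∧ nb G r D = 1) ∨
          (r ∉ D ∧ Sat G s₂ r D ∧ 2 ≤ nb G r D)) := by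
    apply cnt_congr; intro D hD
    constructor
    · rintro ⟨h1, h2, h3⟩
      rcases Nat.lt_or_ge (nb G r D) 2 with hlt | hge
      · exact Or.inl ⟨h1, h2, by omega⟩
      · exact Or.inr ⟨h1, h2, hge⟩
    · rintro (⟨h1, h2, h3⟩ | ⟨h1, h2, h3⟩)
      · exact ⟨h1, h2, by omega⟩
      · exact ⟨h1, h2, by omega⟩
  have e4 : cnt s₂ (fun D => (r ∉ D ∧ Sat G s₂ r D ∧ nb G r D = 1) ∨
        (r ∉ D ∧ Sat G s₂ r D ∧ 2 ≤ nb G r D))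
      = qB1 G s₂ r + qB2 G s₂ r := by
    apply cnt_add; rintro D hD ⟨⟨_, _, h1⟩, ⟨_, _, h2⟩⟩; omega
  unfold qA
  rw [key, e1, e2, e3, e4]
  rfl

include hdis hu1 hr2 hadj hcross in
lemma qB0_split : qB0 G (s₁ ∪ s₂) u = qB0 G s₁ u * qB2 G s₂ r := by
  unfold qB0 qB2
  apply cnt_mul hdis
  intro D hD
  have hsat := sat_split G hdis hu1 hr2 hadj hcross hD
  have hnbu := nb_u_eq G hdis hu1 hr2 hadj hcross hD
  constructor
  · rintro ⟨huD, hS, hnb0⟩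
    obtain ⟨h1, h2, h3⟩ := hsat.1 hS
    have hrD : r ∉ D := by intro hc; rw [if_pos hc] at hnbu; omega
    have := h3 hrD
    rw [if_neg huD] at this
    exact ⟨⟨fun hc => huD (Finset.mem_inter.1 hc).1, h1, by
      rw [if_neg hrD] at hnbu; omega⟩,
      fun hc => hrD (Finset.mem_inter.1 hc).1, h2, by omega⟩
  · rintro ⟨⟨hu', h1, hnb1⟩, hr', h2, hnb2⟩
    have huD : u ∉ D := fun hc => hu' (Finset.mem_inter.2 ⟨hc, hu1⟩)
    have hrD : r ∉ D := fun hc => hr' (Finset.mem_inter.2 ⟨hc, hr2⟩)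
    refine ⟨huD, hsat.2 ⟨h1, h2, fun _ => by rw [if_neg huD]; omega⟩, ?_⟩
    rw [hnbu, if_neg hrD]
    omega

example (s₁ s₂ : Finset V) (u r : V) : DecidablePred (fun D : Finset V =>
          ((u ∉ D ∩ s₁ ∧ Sat G s₁ u (D ∩ s₁) ∧ nb G u (D ∩ s₁) = 1) ∧
            (r ∉ D ∩ s₂ ∧ Sat G s₂ r (D ∩ s₂) ∧ 2 ≤ nb G r (D ∩ s₂))) ∨
          ((u ∉ D ∩ s₁ ∧ Sat G s₁ u (D ∩ s₁) ∧ nb G u (D ∩ s₁) = 0) ∧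
            (r ∈ D ∩ s₂ ∧ Sat G s₂ r (D ∩ s₂)))) := by infer_instance

include hdis hu1 hr2 hadj hcross in
lemma qB1_split :
    qB1 G (s₁ ∪ s₂) u = qB1 G s₁ u * qB2 G s₂ r + qB0 G s₁ u * qA G s₂ r := by
  have e : qB1 G (s₁ ∪ s₂) u
      = cnt (s₁ ∪ s₂) (fun D =>
          ((u ∉ D ∩ s₁ ∧ Sat G s₁ u (D ∩ s₁) ∧ nb G u (D ∩ s₁) = 1) ∧
            (r ∉ D ∩ s₂ ∧ Sat G s₂ r (D ∩ s₂) ∧ 2 ≤ nb G r (D ∩ s₂))) ∨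
          ((u ∉ D ∩ s₁ ∧ Sat G s₁ u (D ∩ s₁) ∧ nb G u (D ∩ s₁) = 0) ∧
            (r ∈ D ∩ s₂ ∧ Sat G s₂ r (D ∩ s₂)))) := by
    apply cnt_congr
    intro D hD
    have hsat := sat_split G hdis hu1 hr2 hadj hcross hD
    have hnbu := nb_u_eq G hdis hu1 hr2 hadj hcross hD
    constructor
    · rintro ⟨huD, hS, hnb1⟩
      obtain ⟨h1, h2, h3⟩ := hsat.1 hS
      have hu' : u ∉ D ∩ s₁ := fun hc => huD (Finset.mem_inter.1 hc).1
      by_cases hrD : r ∈ D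
      · right
        rw [if_pos hrD] at hnbu
        exact ⟨⟨hu', h1, by omega⟩, Finset.mem_inter.2 ⟨hrD, hr2⟩, h2⟩
      · left
        rw [if_neg hrD] at hnbu
        have := h3 hrD
        rw [if_neg huD] at this
        exact ⟨⟨hu', h1, by omega⟩, fun hc => hrD (Finset.mem_inter.1 hc).1, h2, by omega⟩
    · rintro (⟨⟨hu', h1, hnb1⟩, hr', h2, hnb2⟩ | ⟨⟨hu', h1, hnb0⟩, hr', h2⟩)
      · have huD : u ∉ D := fun hc => hu' (Finset.mem_inter.2 ⟨hc, hu1⟩)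
        have hrD : r ∉ D := fun hc => hr' (Finset.mem_inter.2 ⟨hc, hr2⟩)
        refine ⟨huD, hsat.2 ⟨h1, h2, fun _ => by rw [if_neg huD]; omega⟩, ?_⟩
        rw [hnbu, if_neg hrD]; omega
      · have huD : u ∉ D := fun hc => hu' (Finset.mem_inter.2 ⟨hc, hu1⟩)
        have hrD : r ∈ D := (Finset.mem_inter.1 hr').1
        refine ⟨huD, hsat.2 ⟨h1, h2, fun hc => absurd hrD hc⟩, ?_⟩
        rw [hnbu, if_pos hrD]; omega
  rw [e, cnt_add (by rintro D hD ⟨⟨_, h1⟩, ⟨_, h2⟩⟩; exact h1.1 h2.1)]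
  congr 1
  · rw [qB1, qB2]; exact cnt_mul hdis (fun D hD => Iff.rfl)
  · rw [qB0, qA]; exact cnt_mul hdis (fun D hD => Iff.rfl)

include hdis hu1 hr2 hadj hcross in
lemma qB2_split :
    qB2 G (s₁ ∪ s₂) u
      = qB2 G s₁ u * (qA G s₂ r + qB2 G s₂ r) + qB1 G s₁ u * qA G s₂ r := by
  have e : qB2 G (s₁ ∪ s₂) u
      = cnt (s₁ ∪ s₂) (fun D =>
          ((u ∉ D ∩ s₁ ∧ Sat G s₁ u (D ∩ s₁) ∧ 2 ≤ nb G u (D ∩ s₁)) ∧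
            (Sat G s₂ r (D ∩ s₂) ∧ (r ∈ D ∩ s₂ ∨ 2 ≤ nb G r (D ∩ s₂)))) ∨
          ((u ∉ D ∩ s₁ ∧ Sat G s₁ u (D ∩ s₁) ∧ nb G u (D ∩ s₁) = 1) ∧
            (r ∈ D ∩ s₂ ∧ Sat G s₂ r (D ∩ s₂)))) := by
    apply cnt_congr
    intro D hD
    have hsat := sat_split G hdis hu1 hr2 hadj hcross hD
    have hnbu := nb_u_eq G hdis hu1 hr2 hadj hcross hD
    constructor
    · rintro ⟨huD, hS, hnb2⟩
      obtain ⟨h1, h2, h3⟩ := hsat.1 hS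
      have hu' : u ∉ D ∩ s₁ := fun hc => huD (Finset.mem_inter.1 hc).1
      by_cases hrD : r ∈ D
      · rw [if_pos hrD] at hnbu
        rcases Nat.lt_or_ge (nb G u (D ∩ s₁)) 2 with hlt | hge
        · exact Or.inr ⟨⟨hu', h1, by omega⟩, Finset.mem_inter.2 ⟨hrD, hr2⟩, h2⟩
        · exact Or.inl ⟨⟨hu', h1, hge⟩, h2, Or.inl (Finset.mem_inter.2 ⟨hrD, hr2⟩)⟩
      · rw [if_neg hrD] at hnbu
        have := h3 hrD
        rw [if_neg huD] at this
        exact Or.inl ⟨⟨hu', h1, by omega⟩, h2, Or.inr (by omega)⟩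
    · rintro (⟨⟨hu', h1, hnb⟩, h2, h3⟩ | ⟨⟨hu', h1, hnb⟩, hr', h2⟩)
      · have huD : u ∉ D := fun hc => hu' (Finset.mem_inter.2 ⟨hc, hu1⟩)
        refine ⟨huD, hsat.2 ⟨h1, h2, fun hrD => ?_⟩, ?_⟩
        · rw [if_neg huD]
          rcases h3 with h | h
          · exact absurd (Finset.mem_inter.1 h).1 hrD
          · omega
        · rw [hnbu]; omega
      · have huD : u ∉ D := fun hc => hu' (Finset.mem_inter.2 ⟨hc, hu1⟩)
        have hrD : r ∈ D := (Finset.mem_inter.1 hr').1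
        refine ⟨huD, hsat.2 ⟨h1, h2, fun hc => absurd hrD hc⟩, ?_⟩
        rw [hnbu, if_pos hrD]; omega
  rw [e, cnt_add (by rintro D hD ⟨⟨h1, _⟩, ⟨h2, _⟩⟩; omega)]
  congr 1
  · have e2 : cnt s₂ (fun D => Sat G s₂ r D ∧ (r ∈ D ∨ 2 ≤ nb G r D))
        = qA G s₂ r + qB2 G s₂ r := by
      have e3 : cnt s₂ (fun D => Sat G s₂ r D ∧ (r ∈ D ∨ 2 ≤ nb G r D))
          = cnt s₂ (fun D => (r ∈ D ∧ Sat G s₂ r D) ∨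
              (r ∉ D ∧ Sat G s₂ r D ∧ 2 ≤ nb G r D)) := by
        apply cnt_congr; intro D hD; tauto
      rw [e3, cnt_add (by rintro D hD ⟨⟨h1, _⟩, ⟨h2, _⟩⟩; exact h2 h1)]
      rfl
    rw [qB2, ← e2]
    exact cnt_mul hdis (fun D hD => Iff.rfl)
  · rw [qB1, qA]; exact cnt_mul hdis (fun D hD => Iff.rfl)

include hdis hu1 hr2 hadj hcross in
lemma qP_split : qP G (s₁ ∪ s₂) u = qP G s₁ u * qQ G s₂ r := by
  unfold qP qQ
  apply cnt_mul hdis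
  intro I hI
  have hind := ind_split G hdis hu1 hr2 hadj hcross hI
  constructor
  · rintro ⟨hI', huI⟩
    obtain ⟨h1, h2, h3⟩ := hind.1 hI'
    refine ⟨⟨h1, Finset.mem_inter.2 ⟨huI, hu1⟩⟩, h2, ?_⟩
    intro hc
    exact h3 ⟨huI, (Finset.mem_inter.1 hc).1⟩
  · rintro ⟨⟨h1, huI⟩, h2, hrI⟩
    have huI' := (Finset.mem_inter.1 huI).1
    refine ⟨hind.2 ⟨h1, h2, ?_⟩, huI'⟩
    rintro ⟨_, hrI'⟩
    exact hrI (Finset.mem_inter.2 ⟨hrI', hr2⟩)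

include hdis hu1 hr2 hadj hcross in
lemma qQ_split : qQ G (s₁ ∪ s₂) u = qQ G s₁ u * (qP G s₂ r + qQ G s₂ r) := by
  have key : qQ G (s₁ ∪ s₂) u
      = cnt s₁ (fun I => Ind G I ∧ u ∉ I) * cnt s₂ (fun I => Ind G I) := by
    rw [qQ]
    apply cnt_mul hdis
    intro I hI
    have hind := ind_split G hdis hu1 hr2 hadj hcross hI
    constructor
    · rintro ⟨hI', huI⟩
      obtain ⟨h1, h2, _⟩ := hind.1 hI'
      exact ⟨⟨h1, fun hc => huI (Finset.mem_inter.1 hc).1⟩, h2⟩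
    · rintro ⟨⟨h1, huI⟩, h2⟩
      have huI' : u ∉ I := fun hc => huI (Finset.mem_inter.2 ⟨hc, hu1⟩)
      refine ⟨hind.2 ⟨h1, h2, ?_⟩, huI'⟩
      rintro ⟨huI'', _⟩
      exact huI' huI''
  have e : cnt s₂ (fun I => Ind G I) = qP G s₂ r + qQ G s₂ r := by
    have e1 : cnt s₂ (fun I => Ind G I)
        = cnt s₂ (fun I => (Ind G I ∧ r ∈ I) ∨ (Ind G I ∧ r ∉ I)) := by
      apply cnt_congr; intro I hI; tauto
    rw [e1, cnt_add (by rintro I hI ⟨⟨_, h1⟩, ⟨_, h2⟩⟩; exact h2 h1)]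
    rfl
  rw [key, e]
  rfl

end Split





omit [Fintype V] [DecidableRel G.Adj] in
lemma powerset_single (u : V) : ({u} : Finset V).powerset = {∅, {u}} := by
  rw [show ({u} : Finset V) = insert u ∅ from rfl, Finset.powerset_insert,
    Finset.powerset_empty]
  ext D
  simp

lemma sat_singleton (u : V) (D : Finset V) : Sat G {u} u D := by
  intro w hw _ hwu
  rw [Finset.mem_singleton] at hw
  exact absurd hw hwu

lemma ind_singleton (u : V) : Ind G {u} := by
  intro a ha b hb
  rw [Finset.mem_singleton] at ha hb
  subst ha; subst hb
  exact G.irrefl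

omit [Fintype V] in
lemma nb_empty (u : V) : nb G u (∅ : Finset V) = 0 := by
  simp [nb]

lemma qA_singleton (u : V) : qA G {u} u = 1 := by
  rw [qA, cnt, powerset_single]
  rw [show ({∅, {u}} : Finset (Finset V)) = insert ∅ {({u} : Finset V)} from rfl]
  rw [Finset.filter_insert, Finset.filter_singleton,
    if_neg (by simp), if_pos ⟨Finset.mem_singleton_self u, sat_singleton G u _⟩,
    Finset.card_singleton]

lemma qB0_singleton (u : V) : qB0 G {u} u = 1 := by
  rw [qB0, cnt, powerset_single]
  rw [show ({∅, {u}} : Finset (Finset V)) = insert ∅ {({u} : Finset V)} from rfl]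
  rw [Finset.filter_insert, Finset.filter_singleton,
    if_pos ⟨Finset.notMem_empty u, sat_singleton G u _, nb_empty G u⟩,
    if_neg (by simp)]
  simp

lemma qB1_singleton (u : V) : qB1 G {u} u = 0 := by
  rw [qB1, cnt, powerset_single]
  rw [show ({∅, {u}} : Finset (Finset V)) = insert ∅ {({u} : Finset V)} from rfl]
  rw [Finset.filter_insert, Finset.filter_singleton,
    if_neg (by simp [nb_empty]), if_neg (by simp), Finset.card_empty]

lemma qB2_singleton (u : V) : qB2 G {u} u = 0 := by
  rw [qB2, cnt, powerset_single]
  rw [show ({∅, {u}} : Finset (Finset V)) = insert ∅ {({u} : Finset V)} from rfl]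
  rw [Finset.filter_insert, Finset.filter_singleton,
    if_neg (by simp [nb_empty]), if_neg (by simp), Finset.card_empty]

lemma qP_singleton (u : V) : qP G {u} u = 1 := by
  rw [qP, cnt, powerset_single]
  rw [show ({∅, {u}} : Finset (Finset V)) = insert ∅ {({u} : Finset V)} from rfl]
  rw [Finset.filter_insert, Finset.filter_singleton,
    if_neg (by simp), if_pos ⟨ind_singleton G u, Finset.mem_singleton_self u⟩,
    Finset.card_singleton]

lemma qQ_singleton (u : V) : qQ G {u} u = 1 := by
  rw [qQ, cnt, powerset_single]
  rw [show ({∅, {u}} : Finset (Finset V)) = insert ∅ {({u} : Finset V)} from rfl]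
  rw [Finset.filter_insert, Finset.filter_singleton,
    if_pos ⟨(by intro a ha b hb; simp at ha : Ind G ∅), Finset.notMem_empty u⟩,
    if_neg (by simp)]
  simp

lemma qP_pos {s : Finset V} {u : V} (hu : u ∈ s) : 1 ≤ qP G s u := by
  rw [qP, cnt]
  rw [Nat.succ_le_iff, Finset.card_pos]
  exact ⟨{u}, Finset.mem_filter.2 ⟨Finset.mem_powerset.2
    (Finset.singleton_subset_iff.2 hu), ind_singleton G u, Finset.mem_singleton_self u⟩⟩

theorem invariants (hG : G.IsAcyclic) :
    ∀ n (s : Finset V) (u : V), s.card = n → Conn G s → u ∈ s →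
      qA G s u ≤ qP G s u ∧ qB0 G s u ≤ qQ G s u ∧
      qA G s u + qB1 G s u + qB2 G s u ≤ qQ G s u := by
  intro n
  induction n using Nat.strong_induction_on with
  | _ n IH =>
    intro s u hcard hconn hu
    by_cases h1 : s.card ≤ 1
    · have hs : s = {u} := by
        apply Finset.eq_singleton_iff_unique_mem.2
        exact ⟨hu, fun x hx => Finset.card_le_one.1 h1 x hx u hu⟩
      subst hs
      rw [qA_singleton, qB0_singleton, qB1_singleton, qB2_singleton,
        qP_singleton, qQ_singleton]
      omega
    · push_neg at h1
      obtain ⟨r, hr, hadj⟩ := exists_nbr G hconn hu h1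
      obtain ⟨s₁, s₂, hdis, hcov, hu1, hr2, hc1, hc2, hcross⟩ :=
        split_exists G hG hconn hu hr hadj
      have hsub1 : s₁ ⊆ s := hcov ▸ Finset.subset_union_left
      have hsub2 : s₂ ⊆ s := hcov ▸ Finset.subset_union_right
      have hcard1 : s₁.card < n := by
        rw [← hcard]
        apply Finset.card_lt_card
        exact (Finset.ssubset_iff_of_subset hsub1).2
          ⟨r, hr, Finset.disjoint_right.1 hdis hr2⟩
      have hcard2 : s₂.card < n := by
        rw [← hcard]
        apply Finset.card_lt_card
        exact (Finset.ssubset_iff_of_subset hsub2).2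
          ⟨u, hu, Finset.disjoint_left.1 hdis hu1⟩
      obtain ⟨hA1, hB01, hS1⟩ := IH s₁.card hcard1 s₁ u rfl hc1 hu1
      obtain ⟨hA2, hB02, hS2⟩ := IH s₂.card hcard2 s₂ r rfl hc2 hr2
      rw [← hcov]
      rw [qA_split G hdis hu1 hr2 hadj hcross, qB0_split G hdis hu1 hr2 hadj hcross,
        qB1_split G hdis hu1 hr2 hadj hcross, qB2_split G hdis hu1 hr2 hadj hcross,
        qP_split G hdis hu1 hr2 hadj hcross, qQ_split G hdis hu1 hr2 hadj hcross]
      refine ⟨?_, ?_, ?_⟩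
      · exact Nat.mul_le_mul hA1 (by omega)
      · exact Nat.mul_le_mul hB01 (by omega)
      · have h2q : qA G s₂ r + (qB1 G s₂ r + qB2 G s₂ r) ≤ qQ G s₂ r := by omega
        have h2q' : qA G s₂ r + qB2 G s₂ r ≤ qQ G s₂ r := by omega
        calc qA G s₁ u * (qA G s₂ r + (qB1 G s₂ r + qB2 G s₂ r))
              + (qB1 G s₁ u * qB2 G s₂ r + qB0 G s₁ u * qA G s₂ r)
              + (qB2 G s₁ u * (qA G s₂ r + qB2 G s₂ r) + qB1 G s₁ u * qA G s₂ r)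
            = qA G s₁ u * (qA G s₂ r + (qB1 G s₂ r + qB2 G s₂ r))
              + (qB1 G s₁ u + qB2 G s₁ u) * (qA G s₂ r + qB2 G s₂ r)
              + qB0 G s₁ u * qA G s₂ r := by ring
          _ ≤ qA G s₁ u * qQ G s₂ r + (qB1 G s₁ u + qB2 G s₁ u) * qQ G s₂ r
              + qB0 G s₁ u * qP G s₂ r := by
                exact Nat.add_le_add (Nat.add_le_add
                  (Nat.mul_le_mul_left _ h2q) (Nat.mul_le_mul_left _ h2q'))
                  (Nat.mul_le_mul_left _ hA2)
          _ = (qA G s₁ u + qB1 G s₁ u + qB2 G s₁ u) * qQ G s₂ r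
              + qB0 G s₁ u * qP G s₂ r := by ring
          _ ≤ qQ G s₁ u * qQ G s₂ r + qQ G s₁ u * qP G s₂ r :=
                Nat.add_le_add (Nat.mul_le_mul_right _ hS1) (Nat.mul_le_mul_right _ hB01)
          _ = qQ G s₁ u * (qP G s₂ r + qQ G s₂ r) := by ring


omit [Fintype V] in
lemma ncard_nb (v : V) (D : Finset V) :
    {w : V | G.Adj v w ∧ w ∈ D}.ncard = nb G v D := by
  have he : {w : V | G.Adj v w ∧ w ∈ D} = ↑(D.filter (fun z => G.Adj v z)) := by
    ext w
    simp [and_comm]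
  rw [he, Set.ncard_coe_finset, nb]

lemma kdom_iff (u : V) (D : Finset V) :
    IsKDomSet G 2 D ↔
      ((u ∈ D ∧ Sat G Finset.univ u D) ∨
        (u ∉ D ∧ Sat G Finset.univ u D ∧ 2 ≤ nb G u D)) := by
  constructor
  · intro hKD
    have hsat : Sat G Finset.univ u D := by
      intro w _ hwD _
      have := hKD w hwD
      rwa [ncard_nb] at this
    by_cases huD : u ∈ D
    · exact Or.inl ⟨huD, hsat⟩
    · have := hKD u huD
      rw [ncard_nb] at this
      exact Or.inr ⟨huD, hsat, this⟩
  · rintro (⟨huD, hsat⟩ | ⟨huD, hsat, hnb⟩) v hvD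
    · rw [ncard_nb]
      rcases eq_or_ne v u with rfl | hne
      · exact absurd huD hvD
      · exact hsat v (Finset.mem_univ v) hvD hne
    · rw [ncard_nb]
      rcases eq_or_ne v u with rfl | hne
      · exact hnb
      · exact hsat v (Finset.mem_univ v) hvD hne

end TreeCount

/-- Every tree has strictly more independent sets than `2`-dominating sets. -/
theorem stmt_7 {V : Type*} [Fintype V] (T : SimpleGraph V) (hT : T.IsTree) :
    numKDom T 2 < numIndep T := by
  classical
  obtain ⟨u⟩ := hT.isConnected.nonempty
  letI : DecidableRel T.Adj := Classical.decRel _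
  have hconn : TreeCount.Conn T Finset.univ := by
    intro x _ y _
    obtain ⟨w⟩ := hT.isConnected.preconnected x y
    exact ⟨w, fun z _ => Finset.mem_univ z⟩
  have hmain := TreeCount.invariants T hT.IsAcyclic Finset.univ.card Finset.univ u
    rfl hconn (Finset.mem_univ u)
  have hP := TreeCount.qP_pos T (Finset.mem_univ u)
  have hIndep : numIndep T
      = TreeCount.qP T Finset.univ u + TreeCount.qQ T Finset.univ u := by
    have e0 : numIndep T
        = (Finset.univ.filter (fun I : Finset V => TreeCount.Ind T I)).card := by
      rw [numIndep, Nat.card_eq_fintype_card]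
      apply Fintype.card_of_subtype
      intro I
      rw [Finset.mem_filter]
      unfold TreeCount.Ind IsIndepFinset
      simp
    have e1 : TreeCount.cnt (Finset.univ : Finset V) (fun I => TreeCount.Ind T I)
        = (Finset.univ.filter (fun I : Finset V => TreeCount.Ind T I)).card := by
      rw [TreeCount.cnt, Finset.powerset_univ]
    have e2 : TreeCount.cnt (Finset.univ : Finset V) (fun I => TreeCount.Ind T I)
        = TreeCount.qP T Finset.univ u + TreeCount.qQ T Finset.univ u := by
      have e3 : TreeCount.cnt (Finset.univ : Finset V) (fun I => TreeCount.Ind T I)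
          = TreeCount.cnt (Finset.univ : Finset V)
              (fun I => (TreeCount.Ind T I ∧ u ∈ I) ∨ (TreeCount.Ind T I ∧ u ∉ I)) := by
        apply TreeCount.cnt_congr
        intro I _
        tauto
      rw [e3, TreeCount.cnt_add (by rintro I _ ⟨⟨_, h1⟩, ⟨_, h2⟩⟩; exact h2 h1)]
      rfl
    rw [e0, ← e1, e2]
  have hDom : numKDom T 2
      = TreeCount.qA T Finset.univ u + TreeCount.qB2 T Finset.univ u := by
    have e0 : numKDom T 2
        = (Finset.univ.filter (fun D : Finset V =>
            (u ∈ D ∧ TreeCount.Sat T Finset.univ u D) ∨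
            (u ∉ D ∧ TreeCount.Sat T Finset.univ u D ∧ 2 ≤ TreeCount.nb T u D))).card := by
      rw [numKDom, Nat.card_eq_fintype_card]
      apply Fintype.card_of_subtype
      intro D
      rw [Finset.mem_filter]
      rw [TreeCount.kdom_iff T u D]
      simp
    have e1 : TreeCount.cnt (Finset.univ : Finset V) (fun D =>
          (u ∈ D ∧ TreeCount.Sat T Finset.univ u D) ∨
          (u ∉ D ∧ TreeCount.Sat T Finset.univ u D ∧ 2 ≤ TreeCount.nb T u D))
        = (Finset.univ.filter (fun D : Finset V =>
            (u ∈ D ∧ TreeCount.Sat T Finset.univ u D) ∨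
            (u ∉ D ∧ TreeCount.Sat T Finset.univ u D ∧ 2 ≤ TreeCount.nb T u D))).card := by
      rw [TreeCount.cnt, Finset.powerset_univ]
    have e2 : TreeCount.cnt (Finset.univ : Finset V) (fun D =>
          (u ∈ D ∧ TreeCount.Sat T Finset.univ u D) ∨
          (u ∉ D ∧ TreeCount.Sat T Finset.univ u D ∧ 2 ≤ TreeCount.nb T u D))
        = TreeCount.qA T Finset.univ u + TreeCount.qB2 T Finset.univ u := by
      rw [TreeCount.cnt_add (by rintro D _ ⟨⟨h1, _⟩, ⟨h2, _⟩⟩; exact h2 h1)]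
      rfl
    rw [e0, ← e1, e2]
  omega
end

section
/- Let G be a finite simple graph, u a vertex with at least two neighbors, and v a neighbor of u. Then the number of 2-dominating sets of G − v that contain no vertex of N_G[u] \ {v} is at most the number of 2-dominating sets of G − v that contain at least one vertex of N_G[u] \ {v}. -/
open SimpleGraph

/-- If `u` has at least two neighbors and `v` is a neighbor of `u`, then the
number of `2`-dominating sets of `G − v` containing no vertex of
`N_G[u] \ {v}` is at most the number containing at least one such vertex. -/
theorem stmt_12 {V : Type*} [Fintype V] (G : SimpleGraph V) (u v : V)
    (hu : 2 ≤ {w : V | G.Adj u w}.ncard) (hv : G.Adj u v) :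
    Nat.card {D : Finset {x : V // x ≠ v} //
        IsKDomSet (G.induce {x : V | x ≠ v}) 2 D ∧
        ∀ w : {x : V // x ≠ v}, (w.1 = u ∨ G.Adj u w.1) → w ∉ D} ≤
      Nat.card {D : Finset {x : V // x ≠ v} //
        IsKDomSet (G.induce {x : V | x ≠ v}) 2 D ∧
        ∃ w : {x : V // x ≠ v}, (w.1 = u ∨ G.Adj u w.1) ∧ w ∈ D} := by
  classical
  set ue : {x : V // x ≠ v} := ⟨u, hv.ne⟩ with hue
  apply Nat.card_le_card_of_injective
    (fun D => ⟨insert ue D.1, by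
      intro w hw
      have hwD : w ∉ D.1 := fun h => hw (Finset.mem_insert_of_mem h)
      refine le_trans (D.2.1 w hwD) (Set.ncard_le_ncard ?_ (Set.toFinite _))
      intro x hx
      exact ⟨hx.1, Finset.mem_insert_of_mem hx.2⟩, ue, Or.inl rfl,
      Finset.mem_insert_self _ _⟩)
  intro D1 D2 h
  have h' : insert ue D1.1 = insert ue D2.1 := congrArg Subtype.val h
  have h1 : ue ∉ D1.1 := D1.2.2 ue (Or.inl rfl)
  have h2 : ue ∉ D2.1 := D2.2.2 ue (Or.inl rfl)
  have : D1.1 = D2.1 := by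
    rw [← Finset.erase_insert h1, ← Finset.erase_insert h2, h']
  exact Subtype.ext this
end

section
/- Let G be a finite simple graph and u, v two vertices with u ≠ v. There exists a k-dominating set of G avoiding both u and v if and only if either both u and v have degree at least k+1, or u and v are non-adjacent and both have degree at least k. (Stated in the paper for k = 4.) -/
open SimpleGraph

/-! A set avoiding `S` can be `k`-dominating only if every `w ∈ S` has at least `k`
neighbours outside `S`, and then the complement of `S` is `k`-dominating. For `S = {u, v}`
the number of neighbours of `u` outside `S` is `deg u - 1` if `u ~ v` and `deg u` otherwise. -/

namespace SimpleGraph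

variable {V : Type*} (G : SimpleGraph V)

theorem exists_isKDomSet_disjoint_iff [Fintype V] (k : ℕ) (S : Finset V) :
    (∃ D : Finset V, IsKDomSet G k D ∧ Disjoint D S) ↔
      ∀ w ∈ S, k ≤ (G.neighborSet w \ ↑S).ncard := by
  classical
  constructor
  · rintro ⟨D, hD, hDS⟩ w hw
    refine (hD w (Finset.disjoint_right.mp hDS hw)).trans (Set.ncard_le_ncard ?_)
    rintro x ⟨hwx, hxD⟩
    exact ⟨hwx, Finset.disjoint_left.mp hDS hxD⟩
  · intro hS
    refine ⟨Sᶜ, fun w hw => ?_, disjoint_compl_left⟩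
    rw [Finset.notMem_compl] at hw
    convert hS w hw using 2
    ext x
    simp [Set.mem_sdiff]

theorem ncard_neighborSet_sdiff_singleton_add [Finite V] [DecidableRel G.Adj] (u v : V) :
    (G.neighborSet u \ {v}).ncard + (if G.Adj u v then 1 else 0) = (G.neighborSet u).ncard := by
  split_ifs with huv
  · exact Set.ncard_sdiff_singleton_add_one huv
  · rw [Set.sdiff_singleton_eq_self (show v ∉ G.neighborSet u from huv), add_zero]

theorem exists_isKDomSet_avoiding_iff [Fintype V] (k : ℕ) (u v : V) :
    (∃ D : Finset V, IsKDomSet G k D ∧ u ∉ D ∧ v ∉ D) ↔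
      k ≤ (G.neighborSet u \ {v}).ncard ∧ k ≤ (G.neighborSet v \ {u}).ncard := by
  classical
  have h := G.exists_isKDomSet_disjoint_iff k {u, v}
  simp only [Finset.disjoint_insert_right, Finset.disjoint_singleton_right, Finset.mem_insert,
    Finset.mem_singleton, forall_eq_or_imp, forall_eq, Finset.coe_pair] at h
  rw [h, Set.sdiff_insert_of_notMem G.notMem_neighborSet_self, Set.pair_comm,
    Set.sdiff_insert_of_notMem G.notMem_neighborSet_self]

end SimpleGraph

theorem stmt_14_general {V : Type*} [Fintype V] (G : SimpleGraph V) (k : ℕ)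
    (u v : V) :
    (∃ D : Finset V, IsKDomSet G k D ∧ u ∉ D ∧ v ∉ D) ↔
      (k + 1 ≤ {w : V | G.Adj u w}.ncard ∧ k + 1 ≤ {w : V | G.Adj v w}.ncard) ∨
        (¬ G.Adj u v ∧ k ≤ {w : V | G.Adj u w}.ncard ∧
          k ≤ {w : V | G.Adj v w}.ncard) := by
  classical
  have hN (x : V) : {w | G.Adj x w} = G.neighborSet x := rfl
  rw [G.exists_isKDomSet_avoiding_iff, hN, hN]
  have hu := G.ncard_neighborSet_sdiff_singleton_add u v
  have hv := G.ncard_neighborSet_sdiff_singleton_add v u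
  by_cases huv : G.Adj u v <;>
    simp only [huv, G.adj_comm v u, if_true, if_false, not_true_eq_false, not_false_eq_true,
      false_and, or_false, true_and] at hu hv ⊢ <;>
    omega

/-- There is a `k`-dominating set avoiding both `u` and `v` iff either both have
degree at least `k + 1`, or they are non-adjacent and both have degree at least `k`. -/
theorem stmt_14 {V : Type*} [Fintype V] (G : SimpleGraph V) (k : ℕ) (hk : 1 ≤ k)
    (u v : V) (huv : u ≠ v) :
    (∃ D : Finset V, IsKDomSet G k D ∧ u ∉ D ∧ v ∉ D) ↔
      (k + 1 ≤ {w : V | G.Adj u w}.ncard ∧ k + 1 ≤ {w : V | G.Adj v w}.ncard) ∨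
        (¬ G.Adj u v ∧ k ≤ {w : V | G.Adj u w}.ncard ∧
          k ≤ {w : V | G.Adj v w}.ncard) :=
  stmt_14_general G k u v
end
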